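/- arXiv:2511.06155 — 5 statements merged into one kernel-verified Lean document; each statement's English description precedes it below -/
import Mathlib

section
/- Termwise equality of the quasimap vertex function of T*G(r,n) and the balanced I-function of G(r,n): Let K be a field, let q, ℏ ∈ K with q ≠ 0, let t_1,…,t_n ∈ K be nonzero, let 1 ≤ r ≤ n, and let (d_1,…,d_r) ∈ ℤ_{≥0}^r. Assume that every factor appearing in a denominator below (including the factors defining the Pochhammer symbols with possibly negative index) is nonzero. Then ∏_{i=1}^{r}∏_{j=1}^{r} ({t_j/t_i}_{d_i−d_j})^{−1} · ∏_{i=1}^{r}∏_{j=1}^{n} {t_j/t_i}_{d_i} = N/D, where N = [∏_{i=1}^{r}∏_{j=r+1}^{n}∏_{m=1}^{d_i}(1 − ℏ q^{m−1} t_i/t_j)] · [∏_{i=1}^{r}∏_{m=1}^{d_i}(1 − ℏ q^{m−1})] · [∏_{1≤i≠j≤r}∏_{m=−d_i}^{−d_i+d_j−1}(1 − ℏ q^{−m−1} t_i/t_j)] and D = [∏_{i=1}^{r}∏_{j=r+1}^{n}∏_{m=1}^{d_i}(1 − q^{m} t_i/t_j)] · [∏_{i=1}^{r}∏_{m=1}^{d_i}(1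 − q^{m})] · [∏_{1≤i≠j≤r}∏_{m=−d_i}^{−d_i+d_j−1}(1 − q^{−m} t_i/t_j)]. (The left-hand side is the coefficient V_{(d_1,…,d_r)} of the quasimap vertex function of T*G(r,n) at the fixed point ⟨e_1,…,e_r⟩; the right-hand side is the λ_y-balanced coefficient of the I-function of G(r,n) specialized at y = −q^{−1}ℏ.) -/
open Finset

/-- The q-Pochhammer symbol `(w)_d` with integer index:
`(w)_d = ∏_{m=0}^{d−1}(1 − w qᵐ)` for `d ≥ 0`, and
`(w)_d = (∏_{m=1}^{−d}(1 − w q^{−m}))⁻¹` for `d < 0`. -/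
noncomputable def qPoch {K : Type*} [Field K] (q w : K) (d : ℤ) : K :=
  if 0 ≤ d then ∏ m ∈ Finset.range d.toNat, (1 - w * q ^ m)
  else (∏ m ∈ Finset.Icc 1 (-d).toNat, (1 - w * q ^ (-(m : ℤ))))⁻¹

/-- The building block `{x}_d := (ℏ/x)_d · ((q/x)_d)⁻¹` of the quasimap vertex function
of `T*G(r,n)` (after absorbing `(−q^{1/2}ℏ^{−1/2})^d` into the quantum parameter). -/
noncomputable def braces {K : Type*} [Field K] (q ℏ x : K) (d : ℤ) : K :=
  qPoch q (ℏ / x) d * (qPoch q (q / x) d)⁻¹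

/-- All factors defining the Pochhammer symbol `(w)_d` (with possibly negative index)
are nonzero. -/
def pochFactorsNonzero {K : Type*} [Field K] (q w : K) (d : ℤ) : Prop :=
  (∀ m : ℕ, (m : ℤ) < d → 1 - w * q ^ m ≠ 0) ∧
  (∀ m : ℕ, 1 ≤ m → (m : ℤ) ≤ -d → 1 - w * q ^ (-(m : ℤ)) ≠ 0)

section Aux
variable {K : Type*} [Field K]

lemma qPoch_ofNat (q w : K) (d : ℕ) :
    qPoch q w (d : ℤ) = ∏ m ∈ Finset.range d, (1 - w * q ^ m) := by
  simp [qPoch]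

lemma qPoch_nonpos (q w : K) {e : ℤ} (he : e ≤ 0) :
    qPoch q w e = (∏ m ∈ Finset.Icc 1 (-e).toNat, (1 - w * q ^ (-(m : ℤ))))⁻¹ := by
  rcases eq_or_lt_of_le he with rfl | h
  · simp [qPoch]
  · rw [qPoch, if_neg (by omega)]

lemma qPoch_ne_zero {q w : K} {c : ℤ} (h : pochFactorsNonzero q w c) : qPoch q w c ≠ 0 := by
  obtain ⟨h1, h2⟩ := h
  unfold qPoch
  split_ifs with hc
  · exact Finset.prod_ne_zero_iff.2 fun m hm => h1 m (by
      have := Finset.mem_range.1 hm; omega)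
  · refine inv_ne_zero (Finset.prod_ne_zero_iff.2 fun m hm => ?_)
    obtain ⟨hm1, hm2⟩ := Finset.mem_Icc.1 hm
    exact h2 m hm1 (by omega)

lemma qPoch_succ {q : K} (hq : q ≠ 0) (w : K) (c : ℤ)
    (h : c < 0 → 1 - w * q ^ c ≠ 0) :
    qPoch q w (c + 1) = qPoch q w c * (1 - w * q ^ c) := by
  rcases le_or_gt 0 c with hc | hc
  · rw [qPoch, qPoch, if_pos (by omega), if_pos hc]
    have h1 : (c + 1).toNat = c.toNat + 1 := by omega
    have hqc : q ^ c = q ^ c.toNat := by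
      calc q ^ c = q ^ ((c.toNat : ℤ)) := by rw [Int.toNat_of_nonneg hc]
        _ = q ^ c.toNat := zpow_natCast q c.toNat
    rw [h1, Finset.prod_range_succ, hqc]
  · have hne := h hc
    rw [qPoch_nonpos q w (by omega : c + 1 ≤ 0), qPoch_nonpos q w (le_of_lt hc)]
    have hk : (-c).toNat = (-(c+1)).toNat + 1 := by omega
    rw [hk, Finset.prod_Icc_succ_top (by omega)]
    have he : (-(((-(c+1)).toNat + 1 : ℕ) : ℤ)) = c := by omega
    rw [he, mul_inv, inv_mul_cancel_right₀ hne]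

lemma qPoch_telescope {q : K} (hq : q ≠ 0) (w : K) (d e : ℕ)
    (h : ∀ m : ℕ, 1 ≤ m → (m : ℤ) ≤ (e : ℤ) - d → 1 - w * q ^ (-(m : ℤ)) ≠ 0) :
    qPoch q w (d : ℤ) =
      qPoch q w ((d : ℤ) - e) * ∏ s ∈ Finset.range e, (1 - w * q ^ ((d : ℤ) - 1 - s)) := by
  induction e with
  | zero => simp
  | succ e ih =>
    rw [ih (fun m h1 h2 => h m h1 (by push_cast; push_cast at h2; omega)),
      Finset.prod_range_succ]
    have h2 : (d : ℤ) - e = ((d : ℤ) - (e + 1 : ℕ)) + 1 := by push_cast; ring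
    rw [h2, qPoch_succ hq w _ (fun hneg => by
      have h3 : ((d : ℤ) - (e + 1 : ℕ)) = -((((e:ℤ) + 1 - d).toNat : ℤ)) := by
        push_cast at hneg ⊢; omega
      rw [h3]
      exact h _ (by push_cast at hneg ⊢; omega) (by push_cast at hneg ⊢; omega))]
    have h4 : ((d : ℤ) - (e + 1 : ℕ)) = (d : ℤ) - 1 - (e : ℕ) := by push_cast; ring
    rw [h4]; ring

lemma qPoch_ratio {q : K} (hq : q ≠ 0) (w : K) (d e : ℕ)
    (hnz : pochFactorsNonzero q w ((d : ℤ) - e)) :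
    qPoch q w (d : ℤ) * (qPoch q w ((d : ℤ) - e))⁻¹ =
      ∏ s ∈ Finset.range e, (1 - w * q ^ ((d : ℤ) - 1 - s)) := by
  rw [qPoch_telescope hq w d e (fun m h1 h2 => hnz.2 m h1 (by omega))]
  rw [mul_comm (qPoch _ _ _), mul_assoc, mul_inv_cancel₀ (qPoch_ne_zero hnz), mul_one]

lemma braces_ratio {q : K} (hq : q ≠ 0) (ℏ x : K) (d e : ℕ)
    (h1 : pochFactorsNonzero q (ℏ / x) ((d : ℤ) - e))
    (h2 : pochFactorsNonzero q (q / x) ((d : ℤ) - e)) :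
    braces q ℏ x (d : ℤ) * (braces q ℏ x ((d : ℤ) - e))⁻¹ =
      (∏ s ∈ Finset.range e, (1 - ℏ / x * q ^ ((d : ℤ) - 1 - s))) *
        (∏ s ∈ Finset.range e, (1 - q / x * q ^ ((d : ℤ) - 1 - s)))⁻¹ := by
  rw [← qPoch_ratio hq (ℏ/x) d e h1, ← qPoch_ratio hq (q/x) d e h2]
  unfold braces
  simp only [mul_inv, inv_inv]
  ring

lemma braces_div_form (q ℏ : K) (a b : K) (d : ℕ) :
    braces q ℏ (a / b) (d : ℤ) =
      (∏ m ∈ Finset.Icc 1 d, (1 - ℏ * q ^ (m - 1) * (b / a))) /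
      (∏ m ∈ Finset.Icc 1 d, (1 - q ^ m * (b / a))) := by
  have hIcc : ∀ f : ℕ → K, ∏ m ∈ Finset.Icc 1 d, f m = ∏ m ∈ Finset.range d, f (1 + m) := by
    intro f
    rw [← Finset.Ico_add_one_right_eq_Icc, Finset.prod_Ico_eq_prod_range]
    simp
  have hN : qPoch q (ℏ / (a / b)) (d : ℤ) =
      ∏ m ∈ Finset.Icc 1 d, (1 - ℏ * q ^ (m - 1) * (b / a)) := by
    rw [qPoch_ofNat, hIcc]
    apply Finset.prod_congr rfl
    intro m _
    have hm : (1 + m) - 1 = m := by omega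
    rw [hm, div_div_eq_mul_div]
    ring
  have hD : qPoch q (q / (a / b)) (d : ℤ) =
      ∏ m ∈ Finset.Icc 1 d, (1 - q ^ m * (b / a)) := by
    rw [qPoch_ofNat, hIcc]
    apply Finset.prod_congr rfl
    intro m _
    rw [div_div_eq_mul_div]
    ring
  unfold braces
  rw [hN, hD]
  exact (div_eq_mul_inv _ _).symm

lemma braces_one_form (q ℏ : K) (d : ℕ) :
    braces q ℏ 1 (d : ℤ) =
      (∏ m ∈ Finset.Icc 1 d, (1 - ℏ * q ^ (m - 1))) /
      (∏ m ∈ Finset.Icc 1 d, ((1:K) - q ^ m)) := by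
  have := braces_div_form q ℏ 1 1 d
  simp only [div_one, div_self (one_ne_zero (α := K)), mul_one] at this ⊢
  rw [this]
end Aux

/-- **Termwise equality of the quasimap vertex function of `T*G(r,n)` and the balanced
I-function of `G(r,n)`** at the fixed point `⟨e_1,…,e_r⟩`: the coefficient
`V_{(d_1,…,d_r)} = ∏_{i,j=1}^{r} ({t_j/t_i}_{d_i−d_j})⁻¹ · ∏_{i=1}^{r}∏_{j=1}^{n} {t_j/t_i}_{d_i}`
of the vertex function equals the λ_y-balanced coefficient `N/D` of the I-function of
`G(r,n)` specialized at `y = −q⁻¹ℏ`. -/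
theorem vertex_eq_balanced_I_term {K : Type*} [Field K] (q ℏ : K) (hq : q ≠ 0)
    {n r : ℕ} (hr : 1 ≤ r) (hrn : r ≤ n)
    (t : Fin n → K) (ht : ∀ j, t j ≠ 0) (d : Fin r → ℕ)
    (hbr1 : ∀ i j : Fin r,
      pochFactorsNonzero q (ℏ / (t (Fin.castLE hrn j) / t (Fin.castLE hrn i)))
        ((d i : ℤ) - (d j : ℤ)) ∧
      pochFactorsNonzero q (q / (t (Fin.castLE hrn j) / t (Fin.castLE hrn i)))
        ((d i : ℤ) - (d j : ℤ)))
    (hbr2 : ∀ (i : Fin r) (j : Fin n),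
      pochFactorsNonzero q (ℏ / (t j / t (Fin.castLE hrn i))) (d i) ∧
      pochFactorsNonzero q (q / (t j / t (Fin.castLE hrn i))) (d i))
    (hD1 : ∀ (i : Fin r) (j : Fin n), r ≤ (j : ℕ) → ∀ m ∈ Finset.Icc 1 (d i),
      1 - q ^ m * (t (Fin.castLE hrn i) / t j) ≠ 0)
    (hD2 : ∀ i : Fin r, ∀ m ∈ Finset.Icc 1 (d i), (1 : K) - q ^ m ≠ 0)
    (hD3 : ∀ i : Fin r, ∀ j ∈ Finset.univ.erase i, ∀ s ∈ Finset.range (d j),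
      1 - q ^ ((d i : ℤ) - (s : ℤ)) * (t (Fin.castLE hrn i) / t (Fin.castLE hrn j)) ≠ 0) :
    (∏ i : Fin r, ∏ j : Fin r,
        (braces q ℏ (t (Fin.castLE hrn j) / t (Fin.castLE hrn i))
          ((d i : ℤ) - (d j : ℤ)))⁻¹) *
      (∏ i : Fin r, ∏ j : Fin n, braces q ℏ (t j / t (Fin.castLE hrn i)) (d i)) =
    ((∏ i : Fin r, ∏ j ∈ Finset.univ.filter (fun j : Fin n => r ≤ (j : ℕ)),
        ∏ m ∈ Finset.Icc 1 (d i), (1 - ℏ * q ^ (m - 1) * (t (Fin.castLE hrn i) / t j))) *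
      (∏ i : Fin r, ∏ m ∈ Finset.Icc 1 (d i), (1 - ℏ * q ^ (m - 1))) *
      (∏ i : Fin r, ∏ j ∈ Finset.univ.erase i, ∏ s ∈ Finset.range (d j),
        (1 - ℏ * q ^ ((d i : ℤ) - (s : ℤ) - 1) *
          (t (Fin.castLE hrn i) / t (Fin.castLE hrn j))))) /
    ((∏ i : Fin r, ∏ j ∈ Finset.univ.filter (fun j : Fin n => r ≤ (j : ℕ)),
        ∏ m ∈ Finset.Icc 1 (d i), (1 - q ^ m * (t (Fin.castLE hrn i) / t j))) *
      (∏ i : Fin r, ∏ m ∈ Finset.Icc 1 (d i), ((1 : K) - q ^ m)) *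
      (∏ i : Fin r, ∏ j ∈ Finset.univ.erase i, ∏ s ∈ Finset.range (d j),
        (1 - q ^ ((d i : ℤ) - (s : ℤ)) *
          (t (Fin.castLE hrn i) / t (Fin.castLE hrn j))))) := by
  
  rw [← Finset.prod_mul_distrib, ← Finset.prod_mul_distrib, ← Finset.prod_mul_distrib,
    ← Finset.prod_mul_distrib, ← Finset.prod_mul_distrib, ← Finset.prod_div_distrib]
  apply Finset.prod_congr rfl
  intro i _
  -- reindex the `j < r` part of the `Fin n` product
  have hre : ∏ j ∈ Finset.univ.filter (fun j : Fin n => ¬ r ≤ (j : ℕ)),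
        braces q ℏ (t j / t (Fin.castLE hrn i)) ((d i : ℕ) : ℤ)
      = ∏ j : Fin r, braces q ℏ (t (Fin.castLE hrn j) / t (Fin.castLE hrn i)) ((d i : ℕ) : ℤ) := by
    refine Finset.prod_bij (fun a ha => (⟨(a : ℕ), by
        simpa using Finset.mem_filter.1 ha |>.2⟩ : Fin r)) (fun a ha => Finset.mem_univ _)
      (fun a₁ h₁ a₂ h₂ hh => ?_) (fun b _ => ?_) (fun a ha => ?_)
    · exact Fin.ext (by simpa using hh)
    · exact ⟨Fin.castLE hrn b, by simpa using b.isLt, Fin.ext rfl⟩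
    · rfl
  have hA : ∏ j ∈ Finset.univ.filter (fun j : Fin n => r ≤ (j : ℕ)),
        braces q ℏ (t j / t (Fin.castLE hrn i)) ((d i : ℕ) : ℤ)
      = (∏ j ∈ Finset.univ.filter (fun j : Fin n => r ≤ (j : ℕ)),
          ∏ m ∈ Finset.Icc 1 (d i), (1 - ℏ * q ^ (m - 1) * (t (Fin.castLE hrn i) / t j))) /
        (∏ j ∈ Finset.univ.filter (fun j : Fin n => r ≤ (j : ℕ)),
          ∏ m ∈ Finset.Icc 1 (d i), (1 - q ^ m * (t (Fin.castLE hrn i) / t j))) := by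
    rw [← Finset.prod_div_distrib]
    exact Finset.prod_congr rfl fun j _ =>
      braces_div_form q ℏ (t j) (t (Fin.castLE hrn i)) (d i)
  have hB : (∏ j : Fin r, (braces q ℏ (t (Fin.castLE hrn j) / t (Fin.castLE hrn i))
            ((d i : ℤ) - (d j : ℤ)))⁻¹) *
        (∏ j : Fin r, braces q ℏ (t (Fin.castLE hrn j) / t (Fin.castLE hrn i)) ((d i : ℕ) : ℤ))
      = ((∏ m ∈ Finset.Icc 1 (d i), (1 - ℏ * q ^ (m - 1))) /
          (∏ m ∈ Finset.Icc 1 (d i), ((1 : K) - q ^ m))) *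
        ((∏ j ∈ Finset.univ.erase i, ∏ s ∈ Finset.range (d j),
            (1 - ℏ * q ^ ((d i : ℤ) - (s : ℤ) - 1) *
              (t (Fin.castLE hrn i) / t (Fin.castLE hrn j)))) /
          (∏ j ∈ Finset.univ.erase i, ∏ s ∈ Finset.range (d j),
            (1 - q ^ ((d i : ℤ) - (s : ℤ)) *
              (t (Fin.castLE hrn i) / t (Fin.castLE hrn j))))) := by
    rw [← Finset.prod_mul_distrib,
      ← Finset.mul_prod_erase Finset.univ _ (Finset.mem_univ i)]
    congr 1
    · -- diagonal term
      rw [div_self (ht _), sub_self]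
      rw [show braces q ℏ 1 (0 : ℤ) = 1 from by unfold braces qPoch; simp]
      rw [inv_one, one_mul, braces_one_form]
    · -- off-diagonal terms
      rw [← Finset.prod_div_distrib]
      apply Finset.prod_congr rfl
      intro j hj
      rw [mul_comm, braces_ratio hq ℏ _ (d i) (d j) (hbr1 i j).1 (hbr1 i j).2,
        ← div_eq_mul_inv]
      congr 1
      · apply Finset.prod_congr rfl
        intro s _
        rw [div_div_eq_mul_div]
        congr 1
        rw [show (d i : ℤ) - (s : ℤ) - 1 = (d i : ℤ) - 1 - (s : ℤ) from by ring]
        ring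
      · apply Finset.prod_congr rfl
        intro s _
        rw [div_div_eq_mul_div]
        congr 1
        rw [show (d i : ℤ) - (s : ℤ) = 1 + ((d i : ℤ) - 1 - (s : ℤ)) from by ring,
          zpow_add₀ hq, zpow_one]
        ring
  calc (∏ j : Fin r, (braces q ℏ (t (Fin.castLE hrn j) / t (Fin.castLE hrn i))
            ((d i : ℤ) - (d j : ℤ)))⁻¹) *
        (∏ j : Fin n, braces q ℏ (t j / t (Fin.castLE hrn i)) ((d i : ℕ) : ℤ))
      = (∏ j ∈ Finset.univ.filter (fun j : Fin n => r ≤ (j : ℕ)),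
          braces q ℏ (t j / t (Fin.castLE hrn i)) ((d i : ℕ) : ℤ)) *
        ((∏ j : Fin r, (braces q ℏ (t (Fin.castLE hrn j) / t (Fin.castLE hrn i))
            ((d i : ℤ) - (d j : ℤ)))⁻¹) *
         (∏ j : Fin r, braces q ℏ (t (Fin.castLE hrn j) / t (Fin.castLE hrn i))
            ((d i : ℕ) : ℤ))) := by
        rw [← Finset.prod_filter_mul_prod_filter_not Finset.univ
          (fun j : Fin n => r ≤ (j : ℕ)), hre]
        ring
    _ = _ := by
        rw [hA, hB, div_mul_div_comm, div_mul_div_comm, ← mul_assoc, ← mul_assoc]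
end

section
/- The q-difference operator 𝒟 annihilates the hypergeometric series 𝓘: Let K be a commutative ring, q ∈ K, n ≥ 1, and a_1,…,a_n ∈ K such that ∏_{i=1}^{n}(1 − a_i) = 0 and 1 − a_i q^m is a unit in K for every 1 ≤ i ≤ n and every integer m ≥ 1. Define 𝓘 := ∑_{d≥0} (∏_{i=1}^{n}∏_{m=1}^{d}(1 − a_i q^m))^{−1} Q^d ∈ K[[Q]]. Then ((1 − a_1σ_q) ∘ (1 − a_2σ_q) ∘ ⋯ ∘ (1 − a_nσ_q))(𝓘) = Q·𝓘; equivalently, the q-difference operator 𝒟 = ∏_{i=1}^{n}(1 − a_i q^{Q∂_Q}) − Q satisfies 𝒟𝓘 = 0. -/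
open Finset

/-- The hypergeometric `I`-series `𝓘 = ∑_{d ≥ 0} (∏_{i=1}^{n} ∏_{m=1}^{d} (1 - aᵢ qᵐ))⁻¹ Qᵈ`,
where the inverse is `Ring.inverse` (each factor is assumed to be a unit). -/
noncomputable def hypI {K : Type*} [CommRing K] (q : K) {n : ℕ} (a : Fin n → K) :
    PowerSeries K :=
  PowerSeries.mk fun d =>
    Ring.inverse (∏ i : Fin n, ∏ m ∈ Finset.Icc 1 d, (1 - a i * q ^ m))

/-- The composition `(1 - a₁σ_q) ∘ (1 - a₂σ_q) ∘ ⋯ ∘ (1 - a_nσ_q)` of the `q`-difference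
operators `f ↦ f - aᵢ · σ_q(f)`, where `σ_q` is the rescaling operator
`PowerSeries.rescale q` realizing `q^{Q∂_Q}`. -/
noncomputable def qDiffProd {K : Type*} [CommRing K] (q : K) {n : ℕ} (a : Fin n → K) :
    PowerSeries K → PowerSeries K :=
  (List.ofFn fun i : Fin n => fun g : PowerSeries K =>
      g - PowerSeries.C (a i) * PowerSeries.rescale q g).foldr (· ∘ ·) id

lemma coeff_foldr_aux {K : Type*} [CommRing K] (q : K) (d : ℕ) (l : List K)
    (f : PowerSeries K) :
    PowerSeries.coeff d
      ((l.map fun c => fun g : PowerSeries K =>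
          g - PowerSeries.C c * PowerSeries.rescale q g).foldr (· ∘ ·) id f)
      = (l.map fun c => 1 - c * q ^ d).prod * PowerSeries.coeff d f := by
  induction l with
  | nil => simp
  | cons c l ih =>
      simp only [List.map_cons, List.foldr_cons, Function.comp_apply, map_sub,
        PowerSeries.coeff_C_mul, PowerSeries.coeff_rescale, ih, List.prod_cons]
      ring

lemma coeff_qDiffProd {K : Type*} [CommRing K] (q : K) {n : ℕ} (a : Fin n → K)
    (f : PowerSeries K) (d : ℕ) :
    PowerSeries.coeff d (qDiffProd q a f)
      = (∏ i : Fin n, (1 - a i * q ^ d)) * PowerSeries.coeff d f := by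
  unfold qDiffProd
  rw [show (List.ofFn fun i : Fin n => fun g : PowerSeries K =>
        g - PowerSeries.C (a i) * PowerSeries.rescale q g)
      = (List.ofFn a).map (fun c => fun g : PowerSeries K =>
        g - PowerSeries.C c * PowerSeries.rescale q g) from (List.map_ofFn (f := a) (g := fun c => fun g : PowerSeries K =>
        g - PowerSeries.C c * PowerSeries.rescale q g)).symm]
  rw [coeff_foldr_aux]
  congr 1
  rw [List.map_ofFn]
  exact List.prod_ofFn

/-- **The q-difference operator 𝒟 annihilates the hypergeometric series 𝓘.**
If `∏ᵢ (1 - aᵢ) = 0` and every `1 - aᵢ qᵐ` (`m ≥ 1`) is a unit, then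
`((1 - a₁σ_q) ∘ ⋯ ∘ (1 - a_nσ_q)) 𝓘 = Q · 𝓘`, i.e. `𝒟 𝓘 = 0` for
`𝒟 = ∏ᵢ (1 - aᵢ q^{Q∂_Q}) - Q`. -/
theorem qDiff_annihilates_hypI {K : Type*} [CommRing K] (q : K) {n : ℕ} (hn : 1 ≤ n)
    (a : Fin n → K)
    (h0 : ∏ i : Fin n, (1 - a i) = 0)
    (hu : ∀ (i : Fin n) (m : ℕ), 1 ≤ m → IsUnit (1 - a i * q ^ m)) :
    qDiffProd q a (hypI q a) = PowerSeries.X * hypI q a := by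
  ext d
  rw [coeff_qDiffProd]
  cases d with
  | zero =>
      simp [hypI, h0, PowerSeries.coeff_zero_eq_constantCoeff]
  | succ e =>
      rw [PowerSeries.coeff_succ_X_mul]
      simp only [hypI, PowerSeries.coeff_mk]
      set A : K := ∏ i : Fin n, (1 - a i * q ^ (e + 1)) with hA
      set B : K := ∏ i : Fin n, ∏ m ∈ Finset.Icc 1 e, (1 - a i * q ^ m) with hB
      have hsplit : (∏ i : Fin n, ∏ m ∈ Finset.Icc 1 (e + 1), (1 - a i * q ^ m)) = B * A := by
        rw [hB, hA, ← Finset.prod_mul_distrib]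
        refine Finset.prod_congr rfl fun i _ => ?_
        rw [Finset.prod_Icc_succ_top (Nat.le_add_left 1 e)]
      have hAu : IsUnit A :=
        Finset.prod_induction _ IsUnit (fun x y hx hy => hx.mul hy) isUnit_one
          (fun i _ => hu i (e + 1) (Nat.le_add_left 1 e))
      rw [hsplit, Ring.mul_inverse_rev, ← mul_assoc, Ring.mul_inverse_cancel _ hAu, one_mul]
end

section
/- Step 1 of the A-chain (Appendix B): Let 𝒥_1 := (∏_{a=1}^{n}(1 − (P_1/t_a)·σ_1)) 𝒥. Then for every (d_1,…,d_r) ∈ ℤ_{≥0}^r, the coefficient of Q_1^{d_1+1}Q_2^{d_2}⋯Q_r^{d_r} in 𝒥_1 equals A_1 := E · [∏_{j=1}^{n}∏_{m=1}^{d_1+1}(1 + yq^m P_1/t_j)] / [∏_{j=1}^{n}∏_{m=1}^{d_1}(1 − q^m P_1/t_j)] · ∏_{j≠1} [R_{d_1+1−d_j}(λP_1/P_j)/R^y_{d_1+1−d_j}(λP_1/P_j)] · [R_{d_j−d_1−1}(λP_j/P_1)/R^y_{d_j−d_1−1}(λP_j/P_1)] · F. -/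
open Finset

/-- The telescoped ratio `R_k(z) = ∏_{m=1}^{k}(1 − qᵐ z)` for `k ≥ 0` and
`R_k(z) = (∏_{m=k+1}^{0}(1 − qᵐ z))⁻¹` for `k < 0`. -/
noncomputable def Rfac {K : Type*} [Field K] (q z : K) (k : ℤ) : K :=
  if 0 ≤ k then ∏ m ∈ Finset.Icc 1 k.toNat, (1 - q ^ m * z)
  else (∏ s ∈ Finset.range (-k).toNat, (1 - q ^ (-(s : ℤ)) * z))⁻¹

/-- The telescoped ratio `R^y_k(z)`, defined as `R_k(z)` but with factors `(1 + y qᵐ z)`. -/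
noncomputable def Ryfac {K : Type*} [Field K] (q y z : K) (k : ℤ) : K :=
  if 0 ≤ k then ∏ m ∈ Finset.Icc 1 k.toNat, (1 + y * q ^ m * z)
  else (∏ s ∈ Finset.range (-k).toNat, (1 + y * q ^ (-(s : ℤ)) * z))⁻¹

/-- The coefficient `c_{(d_1,…,d_r)}` of the λ_y-balanced twisted J-function of the
abelianization `(ℙ^{n−1})^r` of `G(r,n)`. -/
noncomputable def coefJ {K : Type*} [Field K] {r n : ℕ} (q y lam : K)
    (P : Fin r → K) (t : Fin n → K) (d : Fin r →₀ ℕ) : K :=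
  (∏ i : Fin r, ∏ j : Fin n, ∏ m ∈ Finset.Icc 1 (d i), (1 + y * q ^ m * (P i / t j))) /
    (∏ i : Fin r, ∏ j : Fin n, ∏ m ∈ Finset.Icc 1 (d i), (1 - q ^ m * (P i / t j))) *
    ∏ i : Fin r, ∏ j ∈ Finset.univ.erase i,
      (Rfac q (lam * (P i / P j)) ((d i : ℤ) - (d j : ℤ)) /
        Ryfac q y (lam * (P i / P j)) ((d i : ℤ) - (d j : ℤ)))

/-- The λ_y-balanced twisted J-function `𝒥 = ∑ c_{(d_1,…,d_r)} Q_1^{d_1}⋯Q_r^{d_r}`. -/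
noncomputable def balJ {K : Type*} [Field K] {r n : ℕ} (q y lam : K)
    (P : Fin r → K) (t : Fin n → K) : MvPowerSeries (Fin r) K :=
  fun d => coefJ q y lam P t d

/-- The operator `σ_i` multiplying the coefficient of `Q_1^{d_1}⋯Q_r^{d_r}` by `q^{d_i}`,
realizing the q-difference operator `q^{Q_i ∂_{Q_i}}`; its inverse is `sigmaOp q⁻¹ i`. -/
noncomputable def sigmaOp {K : Type*} [Field K] {r : ℕ} (q : K) (i : Fin r) :
    MvPowerSeries (Fin r) K → MvPowerSeries (Fin r) K :=
  fun f d => q ^ (d i) * f d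

/-- The operator `1 − a·g : f ↦ f − a·g(f)`. -/
noncomputable def oneSubOp {K : Type*} [Field K] {r : ℕ} (a : K)
    (g : MvPowerSeries (Fin r) K → MvPowerSeries (Fin r) K) :
    MvPowerSeries (Fin r) K → MvPowerSeries (Fin r) K :=
  fun f => f - a • g f

/-- The operator `1 + a·g : f ↦ f + a·g(f)`. -/
noncomputable def onePlusOp {K : Type*} [Field K] {r : ℕ} (a : K)
    (g : MvPowerSeries (Fin r) K → MvPowerSeries (Fin r) K) :
    MvPowerSeries (Fin r) K → MvPowerSeries (Fin r) K :=
  fun f => f + a • g f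

/-- Composition of a (finite) list of commuting operators. -/
def prodOp {α : Type*} (l : List (α → α)) : α → α := l.foldr (· ∘ ·) id

/-- The q-difference operator
`𝒟_1^i = [∏_{j≠i}(1 + yλ(P_i/P_j)σ_iσ_j⁻¹)] ∘ [∏_{j≠i}(1 − λq(P_j/P_i)σ_jσ_i⁻¹)] ∘
[∏_{a=1}^{n}(1 − (P_i/t_a)σ_i)]`. -/
noncomputable def opD1 {K : Type*} [Field K] {r n : ℕ} (q y lam : K)
    (P : Fin r → K) (t : Fin n → K) (i : Fin r) :
    MvPowerSeries (Fin r) K → MvPowerSeries (Fin r) K :=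
  prodOp ((Finset.univ.erase i).toList.map fun j =>
      onePlusOp (y * lam * (P i / P j)) (sigmaOp q i ∘ sigmaOp q⁻¹ j)) ∘
    prodOp ((Finset.univ.erase i).toList.map fun j =>
      oneSubOp (lam * q * (P j / P i)) (sigmaOp q j ∘ sigmaOp q⁻¹ i)) ∘
    prodOp (List.ofFn fun a : Fin n => oneSubOp (P i / t a) (sigmaOp q i))

/-- The q-difference operator
`𝒟_2^i = [∏_{j≠i}(1 + yλq(P_j/P_i)σ_jσ_i⁻¹)] ∘ [∏_{a=1}^{n}(1 + y(P_i/t_a)σ_i)] ∘ M_{Q_i}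
∘ [∏_{j≠i}(1 − λq(P_i/P_j)σ_iσ_j⁻¹)]`, where `M_{Q_i}` is multiplication by `Q_i`. -/
noncomputable def opD2 {K : Type*} [Field K] {r n : ℕ} (q y lam : K)
    (P : Fin r → K) (t : Fin n → K) (i : Fin r) :
    MvPowerSeries (Fin r) K → MvPowerSeries (Fin r) K :=
  prodOp ((Finset.univ.erase i).toList.map fun j =>
      onePlusOp (y * lam * q * (P j / P i)) (sigmaOp q j ∘ sigmaOp q⁻¹ i)) ∘
    prodOp (List.ofFn fun a : Fin n => onePlusOp (y * (P i / t a)) (sigmaOp q i)) ∘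
    (fun f => MvPowerSeries.X i * f) ∘
    prodOp ((Finset.univ.erase i).toList.map fun j =>
      oneSubOp (lam * q * (P i / P j)) (sigmaOp q i ∘ sigmaOp q⁻¹ j))

/-- The quantity `E = [∏_{i=2}^{r}∏_{j=1}^{n}∏_{m=1}^{d_i}(1 + yqᵐ P_i/t_j)] /
[∏_{i=2}^{r}∏_{j=1}^{n}∏_{m=1}^{d_i}(1 − qᵐ P_i/t_j)]` of Appendix B, for a fixed tuple
`(d_1,…,d_r)`; here `i₀` is the index `1` of the paper. -/
noncomputable def bigE {K : Type*} [Field K] {r n : ℕ} (q y : K)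
    (P : Fin r → K) (t : Fin n → K) (i₀ : Fin r) (d : Fin r →₀ ℕ) : K :=
  (∏ i ∈ Finset.univ.erase i₀, ∏ j : Fin n, ∏ m ∈ Finset.Icc 1 (d i),
      (1 + y * q ^ m * (P i / t j))) /
    (∏ i ∈ Finset.univ.erase i₀, ∏ j : Fin n, ∏ m ∈ Finset.Icc 1 (d i),
      (1 - q ^ m * (P i / t j)))

/-- The quantity `F = ∏_{2≤i≠j≤r} R_{d_i−d_j}(λP_i/P_j)/R^y_{d_i−d_j}(λP_i/P_j)` of
Appendix B, for a fixed tuple `(d_1,…,d_r)`; here `i₀` is the index `1` of the paper. -/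
noncomputable def bigF {K : Type*} [Field K] {r : ℕ} (q y lam : K)
    (P : Fin r → K) (i₀ : Fin r) (d : Fin r →₀ ℕ) : K :=
  ∏ i ∈ Finset.univ.erase i₀, ∏ j ∈ (Finset.univ.erase i₀).erase i,
    Rfac q (lam * (P i / P j)) ((d i : ℤ) - (d j : ℤ)) /
      Ryfac q y (lam * (P i / P j)) ((d i : ℤ) - (d j : ℤ))


private lemma fold_apply {K : Type*} [Field K] {r : ℕ} (q : K) (i : Fin r) (l : List K)
    (f : MvPowerSeries (Fin r) K) (D : Fin r →₀ ℕ) :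
    prodOp (l.map fun a => oneSubOp a (sigmaOp q i)) f D =
      (l.map fun a => 1 - a * q ^ (D i)).prod * f D := by
  induction l with
  | nil => simp [prodOp]
  | cons a l ih =>
      have h : prodOp ((a :: l).map fun a => oneSubOp a (sigmaOp q i)) f D
          = (prodOp (l.map fun a => oneSubOp a (sigmaOp q i)) f) D
            - a * (q ^ (D i) * (prodOp (l.map fun a => oneSubOp a (sigmaOp q i)) f) D) := rfl
      rw [h, ih]
      simp only [List.map_cons, List.prod_cons]
      ring

private lemma pairs_split {K : Type*} [CommRing K] {r : ℕ} (g : Fin r → Fin r → K) (i₀ : Fin r) :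
    (∏ i : Fin r, ∏ j ∈ Finset.univ.erase i, g i j) =
      (∏ j ∈ Finset.univ.erase i₀, g i₀ j * g j i₀) *
        ∏ i ∈ Finset.univ.erase i₀, ∏ j ∈ (Finset.univ.erase i₀).erase i, g i j := by
  rw [← Finset.mul_prod_erase Finset.univ _ (Finset.mem_univ i₀)]
  have h2 : ∀ i ∈ Finset.univ.erase i₀,
      (∏ j ∈ Finset.univ.erase i, g i j)
        = g i i₀ * ∏ j ∈ (Finset.univ.erase i₀).erase i, g i j := by
    intro i hi
    rw [Finset.erase_right_comm, Finset.mul_prod_erase _ (g i)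
      (Finset.mem_erase.mpr ⟨Ne.symm (Finset.mem_erase.mp hi).1, Finset.mem_univ i₀⟩)]
  rw [Finset.prod_congr rfl h2, Finset.prod_mul_distrib, Finset.prod_mul_distrib]
  ring

private lemma alg_final {K : Type*} [Field K] (X N1 En D1 Ed Pi F : K)
    (hX : X ≠ 0) (hD1 : D1 ≠ 0) (hEd : Ed ≠ 0) :
    X * (N1 * En / (D1 * X * Ed) * (Pi * F)) = En / Ed * (N1 / D1) * Pi * F := by
  field_simp

set_option maxHeartbeats 1000000 in
/-- **Step 1 of the A-chain (Appendix B):** with `𝒥_1 := (∏_{a=1}^{n}(1 − (P_1/t_a)σ_1)) 𝒥`,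
for every `(d_1,…,d_r) ∈ ℤ_{≥0}^r` the coefficient of `Q_1^{d_1+1}Q_2^{d_2}⋯Q_r^{d_r}`
in `𝒥_1` equals `A_1`. -/
theorem Achain_step1 {K : Type*} [Field K] {r n : ℕ} (q y lam : K)
    (P : Fin r → K) (t : Fin n → K)
    (i₀ : Fin r) (hi₀ : (i₀ : ℕ) = 0)
    (hq : q ≠ 0) (hy : y ≠ 0) (hlam : lam ≠ 0)
    (hP : ∀ i, P i ≠ 0) (ht : ∀ j, t j ≠ 0)
    (h1 : ∀ (i : Fin r) (j : Fin n) (m : ℕ), 1 ≤ m → 1 - q ^ m * (P i / t j) ≠ 0)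
    (h2 : ∀ (i j : Fin r), i ≠ j → ∀ m : ℤ, 1 - q ^ m * (lam * (P i / P j)) ≠ 0)
    (h3 : ∀ (i j : Fin r), i ≠ j → ∀ m : ℤ, 1 + y * q ^ m * (lam * (P i / P j)) ≠ 0) :
    ∀ d : Fin r →₀ ℕ,
      MvPowerSeries.coeff (R := K) (d + Finsupp.single i₀ 1)
        (prodOp (List.ofFn fun a : Fin n => oneSubOp (P i₀ / t a) (sigmaOp q i₀))
          (balJ q y lam P t)) =
      bigE q y P t i₀ d *
        ((∏ j : Fin n, ∏ m ∈ Finset.Icc 1 (d i₀ + 1), (1 + y * q ^ m * (P i₀ / t j))) /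
          (∏ j : Fin n, ∏ m ∈ Finset.Icc 1 (d i₀), (1 - q ^ m * (P i₀ / t j)))) *
        (∏ j ∈ Finset.univ.erase i₀,
          (Rfac q (lam * (P i₀ / P j)) ((d i₀ : ℤ) + 1 - (d j : ℤ)) /
              Ryfac q y (lam * (P i₀ / P j)) ((d i₀ : ℤ) + 1 - (d j : ℤ))) *
            (Rfac q (lam * (P j / P i₀)) ((d j : ℤ) - (d i₀ : ℤ) - 1) /
              Ryfac q y (lam * (P j / P i₀)) ((d j : ℤ) - (d i₀ : ℤ) - 1))) *
        bigF q y lam P i₀ d := by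
  intro d
  classical
  set D : Fin r →₀ ℕ := d + Finsupp.single i₀ 1 with hDdef
  have hD0 : D i₀ = d i₀ + 1 := by simp [hDdef]
  have hDj : ∀ j : Fin r, j ≠ i₀ → D j = d j := by
    intro j hj; simp [hDdef, Finsupp.single_apply, Ne.symm hj]
  -- Step 1: the operator acts diagonally on coefficients
  have hcoeff : MvPowerSeries.coeff (R := K) D
      (prodOp (List.ofFn fun a : Fin n => oneSubOp (P i₀ / t a) (sigmaOp q i₀))
        (balJ q y lam P t))
      = (∏ a : Fin n, (1 - q ^ (d i₀ + 1) * (P i₀ / t a))) * coefJ q y lam P t D := by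
    have hop : (List.ofFn fun a : Fin n => oneSubOp (P i₀ / t a) (sigmaOp q i₀))
        = (List.ofFn fun a : Fin n => P i₀ / t a).map (fun a => oneSubOp a (sigmaOp q i₀)) := by
      rw [List.map_ofFn]; rfl
    have : MvPowerSeries.coeff (R := K) D
        (prodOp (List.ofFn fun a : Fin n => oneSubOp (P i₀ / t a) (sigmaOp q i₀))
          (balJ q y lam P t))
        = ((List.ofFn fun a : Fin n => P i₀ / t a).map fun a => 1 - a * q ^ (D i₀)).prod
            * coefJ q y lam P t D := by
      rw [hop]; exact fold_apply q i₀ _ (balJ q y lam P t) D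
    rw [this, List.map_ofFn, List.prod_ofFn]
    congr 1
    refine Finset.prod_congr rfl fun a _ => ?_
    show 1 - (P i₀ / t a) * q ^ (D i₀) = 1 - q ^ (d i₀ + 1) * (P i₀ / t a)
    rw [hD0]; ring
  rw [hcoeff]
  -- abbreviations
  set N1 : K := ∏ j : Fin n, ∏ m ∈ Finset.Icc 1 (d i₀ + 1), (1 + y * q ^ m * (P i₀ / t j)) with hN1
  set D1 : K := ∏ j : Fin n, ∏ m ∈ Finset.Icc 1 (d i₀), (1 - q ^ m * (P i₀ / t j)) with hD1
  set X : K := ∏ j : Fin n, (1 - q ^ (d i₀ + 1) * (P i₀ / t j)) with hXdef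
  set En : K := ∏ i ∈ Finset.univ.erase i₀, ∏ j : Fin n, ∏ m ∈ Finset.Icc 1 (d i),
      (1 + y * q ^ m * (P i / t j)) with hEn
  set Ed : K := ∏ i ∈ Finset.univ.erase i₀, ∏ j : Fin n, ∏ m ∈ Finset.Icc 1 (d i),
      (1 - q ^ m * (P i / t j)) with hEd
  -- split the numerator
  have hNall : (∏ i : Fin r, ∏ j : Fin n, ∏ m ∈ Finset.Icc 1 (D i),
      (1 + y * q ^ m * (P i / t j))) = N1 * En := by
    rw [← Finset.mul_prod_erase Finset.univ _ (Finset.mem_univ i₀), hD0]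
    congr 1
    exact Finset.prod_congr rfl fun i hi => by rw [hDj i (Finset.mem_erase.mp hi).1]
  -- split the denominator
  have hDall : (∏ i : Fin r, ∏ j : Fin n, ∏ m ∈ Finset.Icc 1 (D i),
      (1 - q ^ m * (P i / t j))) = D1 * X * Ed := by
    rw [← Finset.mul_prod_erase Finset.univ _ (Finset.mem_univ i₀), hD0]
    congr 1
    · rw [← Finset.prod_mul_distrib]
      refine Finset.prod_congr rfl fun j _ => ?_
      exact Finset.prod_Icc_succ_top (Nat.succ_le_succ (Nat.zero_le _)) _
    · exact Finset.prod_congr rfl fun i hi => by rw [hDj i (Finset.mem_erase.mp hi).1]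
  -- split the pair product
  have hPairs : (∏ i : Fin r, ∏ j ∈ Finset.univ.erase i,
      (Rfac q (lam * (P i / P j)) ((D i : ℤ) - (D j : ℤ)) /
        Ryfac q y (lam * (P i / P j)) ((D i : ℤ) - (D j : ℤ))))
      = (∏ j ∈ Finset.univ.erase i₀,
          (Rfac q (lam * (P i₀ / P j)) ((d i₀ : ℤ) + 1 - (d j : ℤ)) /
              Ryfac q y (lam * (P i₀ / P j)) ((d i₀ : ℤ) + 1 - (d j : ℤ))) *
            (Rfac q (lam * (P j / P i₀)) ((d j : ℤ) - (d i₀ : ℤ) - 1) /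
              Ryfac q y (lam * (P j / P i₀)) ((d j : ℤ) - (d i₀ : ℤ) - 1)))
        * bigF q y lam P i₀ d := by
    rw [pairs_split (fun i j => Rfac q (lam * (P i / P j)) ((D i : ℤ) - (D j : ℤ)) /
        Ryfac q y (lam * (P i / P j)) ((D i : ℤ) - (D j : ℤ))) i₀]
    congr 1
    · refine Finset.prod_congr rfl fun j hj => ?_
      have hj' := (Finset.mem_erase.mp hj).1
      have e1 : ((D i₀ : ℕ) : ℤ) - ((D j : ℕ) : ℤ) = (d i₀ : ℤ) + 1 - (d j : ℤ) := by
        rw [hD0, hDj j hj']; push_cast; ring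
      have e2 : ((D j : ℕ) : ℤ) - ((D i₀ : ℕ) : ℤ) = (d j : ℤ) - (d i₀ : ℤ) - 1 := by
        rw [hD0, hDj j hj']; push_cast; ring
      rw [e1, e2]
    · rw [bigF]
      refine Finset.prod_congr rfl fun i hi => Finset.prod_congr rfl fun j hj => ?_
      have hi' := (Finset.mem_erase.mp hi).1
      have hj' := (Finset.mem_erase.mp (Finset.mem_of_mem_erase hj)).1
      rw [hDj i hi', hDj j hj']
  rw [coefJ, hNall, hDall, hPairs, bigE, ← hEn, ← hEd]
  -- nonvanishing
  have hXne : X ≠ 0 := Finset.prod_ne_zero_iff.mpr fun j _ =>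
    h1 i₀ j (d i₀ + 1) (Nat.succ_le_succ (Nat.zero_le _))
  have hD1ne : D1 ≠ 0 := Finset.prod_ne_zero_iff.mpr fun j _ =>
    Finset.prod_ne_zero_iff.mpr fun m hm => h1 i₀ j m (Finset.mem_Icc.mp hm).1
  have hEdne : Ed ≠ 0 := Finset.prod_ne_zero_iff.mpr fun i _ =>
    Finset.prod_ne_zero_iff.mpr fun j _ =>
      Finset.prod_ne_zero_iff.mpr fun m hm => h1 i j m (Finset.mem_Icc.mp hm).1
  exact alg_final X N1 En D1 Ed _ _ hXne hD1ne hEdne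
end

section
/- Step 2 of the A-chain (Appendix B): Let 𝒥_1 := (∏_{a=1}^{n}(1 − (P_1/t_a)·σ_1)) 𝒥 and 𝒥_2 := (∏_{j≠1}(1 − λq(P_j/P_1)·σ_jσ_1^{−1})) 𝒥_1. Then for every (d_1,…,d_r) ∈ ℤ_{≥0}^r, the coefficient of Q_1^{d_1+1}Q_2^{d_2}⋯Q_r^{d_r} in 𝒥_2 equals A_2 := E · [∏_{j=1}^{n}∏_{m=1}^{d_1+1}(1 + yq^m P_1/t_j)] / [∏_{j=1}^{n}∏_{m=1}^{d_1}(1 − q^m P_1/t_j)] · ∏_{j≠1} [R_{d_1+1−d_j}(λP_1/P_j)/R^y_{d_1+1−d_j}(λP_1/P_j)] · [R_{d_j−d_1}(λP_j/P_1)/R^y_{d_j−d_1−1}(λP_j/P_1)] · F. -/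
open Finset

section AuxLemmas

variable {K : Type*} [Field K] {r n : ℕ}

lemma Rfac_step (q z : K) (k : ℤ)
    (h : ∀ m : ℤ, (1 : K) - q ^ m * z ≠ 0) :
    Rfac q z k = Rfac q z (k - 1) * (1 - q ^ k * z) := by
  rcases lt_trichotomy k 0 with hk | hk | hk
  · have h1 : ¬ (0 : ℤ) ≤ k := by omega
    have h2 : ¬ (0 : ℤ) ≤ k - 1 := by omega
    have hN : (-(k-1)).toNat = (-k).toNat + 1 := by omega
    rw [Rfac, Rfac, if_neg h1, if_neg h2, hN, Finset.prod_range_succ]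
    have hcast : (-(((-k).toNat : ℕ) : ℤ)) = k := by omega
    rw [hcast, mul_inv, mul_assoc, inv_mul_cancel₀ (h k), mul_one]
  · subst hk
    rw [Rfac, Rfac, if_pos le_rfl, if_neg (by norm_num)]
    norm_num
    rw [inv_mul_cancel₀]
    simpa using h 0
  · have h1 : (0 : ℤ) ≤ k := le_of_lt hk
    have h2 : (0 : ℤ) ≤ k - 1 := by omega
    obtain ⟨m, hm⟩ : ∃ m : ℕ, k.toNat = m + 1 := ⟨k.toNat - 1, by omega⟩
    rw [Rfac, Rfac, if_pos h1, if_pos h2, hm]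
    have h3 : (k - 1).toNat = m := by omega
    rw [h3, Finset.prod_Icc_succ_top (Nat.succ_le_succ (Nat.zero_le m))]
    have h4 : (q : K) ^ k = q ^ (m + 1 : ℕ) := by
      rw [← zpow_natCast]; congr 1; omega
    rw [h4]

lemma prodOp_diag {α : Type*} (l : List α)
    (φ : α → (MvPowerSeries (Fin r) K → MvPowerSeries (Fin r) K)) (c : α → K)
    (e : Fin r →₀ ℕ)
    (h : ∀ a ∈ l, ∀ f : MvPowerSeries (Fin r) K, φ a f e = c a * f e)
    (f : MvPowerSeries (Fin r) K) :
    prodOp (l.map φ) f e = (l.map c).prod * f e := by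
  induction l with
  | nil => simp [prodOp]
  | cons a l ih =>
      have h0 : prodOp ((a :: l).map φ) f = φ a (prodOp (l.map φ) f) := rfl
      rw [h0, h a List.mem_cons_self, ih (fun b hb => h b (List.mem_cons_of_mem a hb))]
      simp [mul_assoc]

lemma oneSubOp_sigma_apply (q b : K) (i : Fin r)
    (f : MvPowerSeries (Fin r) K) (e : Fin r →₀ ℕ) :
    oneSubOp b (sigmaOp q i) f e = (1 - b * q ^ (e i)) * f e := by
  show f e - b * (q ^ (e i) * f e) = _
  ring

lemma oneSubOp_sigma2_apply (q q' b : K) (i j : Fin r)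
    (f : MvPowerSeries (Fin r) K) (e : Fin r →₀ ℕ) :
    oneSubOp b (sigmaOp q i ∘ sigmaOp q' j) f e
      = (1 - b * (q ^ (e i) * q' ^ (e j))) * f e := by
  show f e - b * (q ^ (e i) * (q' ^ (e j) * f e)) = _
  ring

lemma erase_erase_comm {α : Type*} [DecidableEq α] (s : Finset α) (a b : α) :
    (s.erase a).erase b = (s.erase b).erase a := by
  ext x; simp only [Finset.mem_erase]; tauto

lemma final_alg (a t1 t2 t3 t4 bc g1 g2 ff : K)
    (hbc : bc ≠ 0) (ht2 : t2 ≠ 0) (ht4 : t4 ≠ 0) :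
    a * (bc * ((t3 * t1) / ((t4 * bc) * t2) * (g1 * (g2 * ff))))
      = t1 / t2 * (t3 / t4) * (g1 * (a * g2)) * ff := by
  field_simp

end AuxLemmas

/-- **Step 2 of the A-chain (Appendix B):** with
`𝒥_1 := (∏_{a=1}^{n}(1 − (P_1/t_a)σ_1)) 𝒥` and
`𝒥_2 := (∏_{j≠1}(1 − λq(P_j/P_1)σ_jσ_1⁻¹)) 𝒥_1`, for every `(d_1,…,d_r) ∈ ℤ_{≥0}^r`
the coefficient of `Q_1^{d_1+1}Q_2^{d_2}⋯Q_r^{d_r}` in `𝒥_2` equals `A_2`. -/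
theorem Achain_step2 {K : Type*} [Field K] {r n : ℕ} (q y lam : K)
    (P : Fin r → K) (t : Fin n → K)
    (i₀ : Fin r) (hi₀ : (i₀ : ℕ) = 0)
    (hq : q ≠ 0) (hy : y ≠ 0) (hlam : lam ≠ 0)
    (hP : ∀ i, P i ≠ 0) (ht : ∀ j, t j ≠ 0)
    (h1 : ∀ (i : Fin r) (j : Fin n) (m : ℕ), 1 ≤ m → 1 - q ^ m * (P i / t j) ≠ 0)
    (h2 : ∀ (i j : Fin r), i ≠ j → ∀ m : ℤ, 1 - q ^ m * (lam * (P i / P j)) ≠ 0)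
    (h3 : ∀ (i j : Fin r), i ≠ j → ∀ m : ℤ, 1 + y * q ^ m * (lam * (P i / P j)) ≠ 0) :
    ∀ d : Fin r →₀ ℕ,
      MvPowerSeries.coeff (d + Finsupp.single i₀ 1)
        (prodOp ((Finset.univ.erase i₀).toList.map fun j =>
            oneSubOp (lam * q * (P j / P i₀)) (sigmaOp q j ∘ sigmaOp q⁻¹ i₀))
          (prodOp (List.ofFn fun a : Fin n => oneSubOp (P i₀ / t a) (sigmaOp q i₀))
            (balJ q y lam P t))) =
      bigE q y P t i₀ d *
        ((∏ j : Fin n, ∏ m ∈ Finset.Icc 1 (d i₀ + 1), (1 + y * q ^ m * (P i₀ / t j))) /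
          (∏ j : Fin n, ∏ m ∈ Finset.Icc 1 (d i₀), (1 - q ^ m * (P i₀ / t j)))) *
        (∏ j ∈ Finset.univ.erase i₀,
          (Rfac q (lam * (P i₀ / P j)) ((d i₀ : ℤ) + 1 - (d j : ℤ)) /
              Ryfac q y (lam * (P i₀ / P j)) ((d i₀ : ℤ) + 1 - (d j : ℤ))) *
            (Rfac q (lam * (P j / P i₀)) ((d j : ℤ) - (d i₀ : ℤ)) /
              Ryfac q y (lam * (P j / P i₀)) ((d j : ℤ) - (d i₀ : ℤ) - 1))) *
        bigF q y lam P i₀ d := by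
  intro d
  classical
  set e : Fin r →₀ ℕ := d + Finsupp.single i₀ 1 with he
  have hei₀ : e i₀ = d i₀ + 1 := by simp [he]
  have hej : ∀ j ∈ Finset.univ.erase i₀, e j = d j := by
    intro j hj
    have hne : j ≠ i₀ := (Finset.mem_erase.1 hj).1
    simp [he, Finsupp.single_eq_of_ne hne]
  -- coefficient of the inner operator application
  have hinner : prodOp (List.ofFn fun a : Fin n => oneSubOp (P i₀ / t a) (sigmaOp q i₀))
      (balJ q y lam P t) e
      = (∏ a : Fin n, (1 - P i₀ / t a * q ^ (e i₀))) * coefJ q y lam P t e := by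
    rw [List.ofFn_eq_map,
      prodOp_diag (List.finRange n) _ (fun a => 1 - P i₀ / t a * q ^ (e i₀)) e
        (fun a _ f => oneSubOp_sigma_apply q _ i₀ f e) (balJ q y lam P t),
      ← List.ofFn_eq_map, List.prod_ofFn]
    rfl
  have houter := prodOp_diag (Finset.univ.erase i₀).toList
      (fun j => oneSubOp (lam * q * (P j / P i₀)) (sigmaOp q j ∘ sigmaOp q⁻¹ i₀))
      (fun j => 1 - lam * q * (P j / P i₀) * (q ^ (e j) * q⁻¹ ^ (e i₀))) e
      (fun j _ f => oneSubOp_sigma2_apply q q⁻¹ _ j i₀ f e)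
      (prodOp (List.ofFn fun a : Fin n => oneSubOp (P i₀ / t a) (sigmaOp q i₀))
        (balJ q y lam P t))
  rw [MvPowerSeries.coeff_apply, houter, Finset.prod_map_toList, hinner]
  -- canonicalize the two operator eigenvalue products
  have hA : (∏ j ∈ Finset.univ.erase i₀,
        (1 - lam * q * (P j / P i₀) * (q ^ (e j) * q⁻¹ ^ (e i₀))))
      = ∏ j ∈ Finset.univ.erase i₀,
        (1 - q ^ ((d j : ℤ) - (d i₀ : ℤ)) * (lam * (P j / P i₀))) := by
    refine Finset.prod_congr rfl fun j hj => ?_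
    rw [hej j hj, hei₀]
    congr 1
    rw [zpow_sub₀ hq, zpow_natCast, zpow_natCast, div_eq_mul_inv (q ^ d j), ← inv_pow, pow_succ]
    calc lam * q * (P j / P i₀) * (q ^ d j * (q⁻¹ ^ d i₀ * q⁻¹))
        = (q * q⁻¹) * (q ^ d j * q⁻¹ ^ d i₀ * (lam * (P j / P i₀))) := by ring
      _ = q ^ d j * q⁻¹ ^ d i₀ * (lam * (P j / P i₀)) := by
          rw [mul_inv_cancel₀ hq, one_mul]
  have hB : (∏ a : Fin n, (1 - P i₀ / t a * q ^ (e i₀)))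
      = ∏ a : Fin n, (1 - q ^ (d i₀ + 1) * (P i₀ / t a)) := by
    refine Finset.prod_congr rfl fun a _ => ?_
    rw [hei₀]; ring
  rw [hA, hB]
  -- expand `coefJ` at `e`
  have hcoef : coefJ q y lam P t e
      = ((∏ j : Fin n, ∏ m ∈ Finset.Icc 1 (d i₀ + 1), (1 + y * q ^ m * (P i₀ / t j)))
          * (∏ i ∈ Finset.univ.erase i₀, ∏ j : Fin n, ∏ m ∈ Finset.Icc 1 (d i),
              (1 + y * q ^ m * (P i / t j))))
        / (((∏ j : Fin n, ∏ m ∈ Finset.Icc 1 (d i₀), (1 - q ^ m * (P i₀ / t j)))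
              * (∏ a : Fin n, (1 - q ^ (d i₀ + 1) * (P i₀ / t a))))
            * (∏ i ∈ Finset.univ.erase i₀, ∏ j : Fin n, ∏ m ∈ Finset.Icc 1 (d i),
              (1 - q ^ m * (P i / t j))))
        * ((∏ j ∈ Finset.univ.erase i₀,
              Rfac q (lam * (P i₀ / P j)) ((d i₀ : ℤ) + 1 - (d j : ℤ)) /
                Ryfac q y (lam * (P i₀ / P j)) ((d i₀ : ℤ) + 1 - (d j : ℤ)))
            * ((∏ j ∈ Finset.univ.erase i₀,
                  Rfac q (lam * (P j / P i₀)) ((d j : ℤ) - (d i₀ : ℤ) - 1) /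
                    Ryfac q y (lam * (P j / P i₀)) ((d j : ℤ) - (d i₀ : ℤ) - 1))
              * bigF q y lam P i₀ d)) := by
    rw [coefJ]
    congr 1
    · congr 1
      · rw [← Finset.mul_prod_erase Finset.univ _ (Finset.mem_univ i₀)]
        congr 1
        · rw [hei₀]
        · exact Finset.prod_congr rfl fun i hi => by rw [hej i hi]
      · rw [← Finset.mul_prod_erase Finset.univ _ (Finset.mem_univ i₀)]
        congr 1
        · rw [hei₀]
          rw [show ((∏ j : Fin n, ∏ m ∈ Finset.Icc 1 (d i₀), (1 - q ^ m * (P i₀ / t j)))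
                * (∏ a : Fin n, (1 - q ^ (d i₀ + 1) * (P i₀ / t a))))
              = ∏ j : Fin n, ((∏ m ∈ Finset.Icc 1 (d i₀), (1 - q ^ m * (P i₀ / t j)))
                * (1 - q ^ (d i₀ + 1) * (P i₀ / t j))) from (Finset.prod_mul_distrib).symm]
          exact Finset.prod_congr rfl fun j _ =>
            Finset.prod_Icc_succ_top (Nat.succ_le_succ (Nat.zero_le _)) _
        · exact Finset.prod_congr rfl fun i hi => by rw [hej i hi]
    · rw [← Finset.mul_prod_erase Finset.univ _ (Finset.mem_univ i₀)]
      congr 1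
      · refine Finset.prod_congr rfl fun j hj => ?_
        rw [hej j hj, hei₀]
        have hx : (((d i₀ + 1 : ℕ) : ℤ) - (d j : ℤ)) = (d i₀ : ℤ) + 1 - (d j : ℤ) := by
          push_cast; ring
        rw [hx]
      · have step : ∀ i ∈ Finset.univ.erase i₀,
            (∏ j ∈ Finset.univ.erase i,
              Rfac q (lam * (P i / P j)) ((e i : ℤ) - (e j : ℤ)) /
                Ryfac q y (lam * (P i / P j)) ((e i : ℤ) - (e j : ℤ)))
            = (Rfac q (lam * (P i / P i₀)) ((e i : ℤ) - (e i₀ : ℤ)) /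
                Ryfac q y (lam * (P i / P i₀)) ((e i : ℤ) - (e i₀ : ℤ)))
              * ∏ j ∈ (Finset.univ.erase i₀).erase i,
                  Rfac q (lam * (P i / P j)) ((e i : ℤ) - (e j : ℤ)) /
                    Ryfac q y (lam * (P i / P j)) ((e i : ℤ) - (e j : ℤ)) := by
          intro i hi
          have hne : i ≠ i₀ := (Finset.mem_erase.1 hi).1
          have hmem : i₀ ∈ Finset.univ.erase i :=
            Finset.mem_erase.2 ⟨hne.symm, Finset.mem_univ _⟩
          rw [← Finset.mul_prod_erase _ _ hmem, erase_erase_comm]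
        rw [Finset.prod_congr rfl step, Finset.prod_mul_distrib]
        congr 1
        · refine Finset.prod_congr rfl fun i hi => ?_
          rw [hej i hi, hei₀]
          have hx : ((d i : ℤ) - ((d i₀ + 1 : ℕ) : ℤ)) = (d i : ℤ) - (d i₀ : ℤ) - 1 := by
            push_cast; ring
          rw [hx]
        · rw [bigF]
          exact Finset.prod_congr rfl fun i hi => Finset.prod_congr rfl fun j hj => by
            rw [hej i hi, hej j (Finset.mem_of_mem_erase hj)]
  rw [hcoef]
  -- expand the right-hand side
  rw [bigE, Finset.prod_mul_distrib]
  have hG2 : (∏ j ∈ Finset.univ.erase i₀,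
        Rfac q (lam * (P j / P i₀)) ((d j : ℤ) - (d i₀ : ℤ)) /
          Ryfac q y (lam * (P j / P i₀)) ((d j : ℤ) - (d i₀ : ℤ) - 1))
      = (∏ j ∈ Finset.univ.erase i₀,
          (1 - q ^ ((d j : ℤ) - (d i₀ : ℤ)) * (lam * (P j / P i₀))))
        * ∏ j ∈ Finset.univ.erase i₀,
            Rfac q (lam * (P j / P i₀)) ((d j : ℤ) - (d i₀ : ℤ) - 1) /
              Ryfac q y (lam * (P j / P i₀)) ((d j : ℤ) - (d i₀ : ℤ) - 1) := by
    rw [← Finset.prod_mul_distrib]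
    refine Finset.prod_congr rfl fun j hj => ?_
    have hne : j ≠ i₀ := (Finset.mem_erase.1 hj).1
    rw [Rfac_step q _ _ (h2 j i₀ hne)]
    ring
  rw [hG2]
  -- final algebraic identity
  refine final_alg _ _ _ _ _ _ _ _ _ ?_ ?_ ?_
  · exact Finset.prod_ne_zero_iff.2 fun a _ => h1 i₀ a _ (Nat.succ_le_succ (Nat.zero_le _))
  · exact Finset.prod_ne_zero_iff.2 fun i _ => Finset.prod_ne_zero_iff.2 fun j _ =>
      Finset.prod_ne_zero_iff.2 fun m hm => h1 i j m (Finset.mem_Icc.1 hm).1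
  · exact Finset.prod_ne_zero_iff.2 fun j _ =>
      Finset.prod_ne_zero_iff.2 fun m hm => h1 i₀ j m (Finset.mem_Icc.1 hm).1
end

section
/- Step 1 of the B-chain (Appendix B): Let 𝓘_1 := Q_1 · (∏_{j≠1}(1 − λq(P_1/P_j)·σ_1σ_j^{−1})) 𝒥. Then for every (d_1,…,d_r) ∈ ℤ_{≥0}^r, the coefficient of Q_1^{d_1+1}Q_2^{d_2}⋯Q_r^{d_r} in 𝓘_1 equals B_1 := E · [∏_{j=1}^{n}∏_{m=1}^{d_1}(1 + yq^m P_1/t_j)] / [∏_{j=1}^{n}∏_{m=1}^{d_1}(1 − q^m P_1/t_j)] · ∏_{j≠1} [R_{d_1+1−d_j}(λP_1/P_j)/R^y_{d_1−d_j}(λP_1/P_j)] · [R_{d_j−d_1}(λP_j/P_1)/R^y_{d_j−d_1}(λP_j/P_1)] · F. -/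
open Finset

section BchainHelpers
variable {K : Type*} [Field K] {r : ℕ}

lemma mv_sub_apply (f g : MvPowerSeries (Fin r) K) (d : Fin r →₀ ℕ) :
    (f - g) d = f d - g d := rfl

lemma mv_smul_apply (a : K) (f : MvPowerSeries (Fin r) K) (d : Fin r →₀ ℕ) :
    (a • f) d = a * f d := rfl

lemma coeff_prodOp_oneSub (q : K) (i : Fin r) (a : Fin r → K)
    (l : List (Fin r)) (f : MvPowerSeries (Fin r) K) (d : Fin r →₀ ℕ) :
    prodOp (l.map fun j => oneSubOp (a j) (sigmaOp q i ∘ sigmaOp q⁻¹ j)) f d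
      = (l.map fun j => 1 - a j * (q ^ (d i) * q⁻¹ ^ (d j))).prod * f d := by
  induction l with
  | nil => simp [prodOp]
  | cons x xs ih =>
    rw [List.map_cons, List.map_cons, List.prod_cons]
    show oneSubOp (a x) (sigmaOp q i ∘ sigmaOp q⁻¹ x)
        (prodOp (xs.map fun j => oneSubOp (a j) (sigmaOp q i ∘ sigmaOp q⁻¹ j)) f) d = _
    rw [oneSubOp, mv_sub_apply, mv_smul_apply, Function.comp_apply, sigmaOp, sigmaOp]
    rw [ih]
    ring

lemma Rfac_succ (q z : K) (hq : q ≠ 0) (h : ∀ m : ℤ, 1 - q ^ m * z ≠ 0) (k : ℤ) :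
    Rfac q z (k + 1) = Rfac q z k * (1 - q ^ (k + 1) * z) := by
  rcases lt_trichotomy k (-1) with hk | hk | hk
  · have hk1 : ¬ (0 ≤ k + 1) := by omega
    have hk2 : ¬ (0 ≤ k) := by omega
    rw [Rfac, Rfac, if_neg hk1, if_neg hk2]
    have hN : (-k).toNat = (-(k+1)).toNat + 1 := by omega
    rw [hN, Finset.prod_range_succ]
    have hNe : (-(((-(k+1)).toNat : ℕ) : ℤ)) = k + 1 := by omega
    rw [hNe, mul_inv, mul_assoc, inv_mul_cancel₀ (h (k+1)), mul_one]
  · subst hk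
    norm_num [Rfac]
    exact (inv_mul_cancel₀ (by simpa using h 0)).symm
  · have hk2 : 0 ≤ k := by omega
    rw [Rfac, Rfac, if_pos (by omega), if_pos hk2]
    have hN : (k+1).toNat = k.toNat + 1 := by omega
    rw [hN, Finset.prod_Icc_succ_top (Nat.one_le_iff_ne_zero.mpr (Nat.succ_ne_zero _))]
    congr 2
    rw [show k + 1 = ((k.toNat + 1 : ℕ) : ℤ) by omega, zpow_natCast]

end BchainHelpers

/-- **Step 1 of the B-chain (Appendix B):** with
`𝓘_1 := Q_1 · (∏_{j≠1}(1 − λq(P_1/P_j)σ_1σ_j⁻¹)) 𝒥`, for every `(d_1,…,d_r) ∈ ℤ_{≥0}^r`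
the coefficient of `Q_1^{d_1+1}Q_2^{d_2}⋯Q_r^{d_r}` in `𝓘_1` equals `B_1`. -/
theorem Bchain_step1 {K : Type*} [Field K] {r n : ℕ} (q y lam : K)
    (P : Fin r → K) (t : Fin n → K)
    (i₀ : Fin r) (hi₀ : (i₀ : ℕ) = 0)
    (hq : q ≠ 0) (hy : y ≠ 0) (hlam : lam ≠ 0)
    (hP : ∀ i, P i ≠ 0) (ht : ∀ j, t j ≠ 0)
    (h1 : ∀ (i : Fin r) (j : Fin n) (m : ℕ), 1 ≤ m → 1 - q ^ m * (P i / t j) ≠ 0)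
    (h2 : ∀ (i j : Fin r), i ≠ j → ∀ m : ℤ, 1 - q ^ m * (lam * (P i / P j)) ≠ 0)
    (h3 : ∀ (i j : Fin r), i ≠ j → ∀ m : ℤ, 1 + y * q ^ m * (lam * (P i / P j)) ≠ 0) :
    ∀ d : Fin r →₀ ℕ,
      MvPowerSeries.coeff (d + Finsupp.single i₀ 1)
        (MvPowerSeries.X i₀ *
          prodOp ((Finset.univ.erase i₀).toList.map fun j =>
              oneSubOp (lam * q * (P i₀ / P j)) (sigmaOp q i₀ ∘ sigmaOp q⁻¹ j))
            (balJ q y lam P t)) =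
      bigE q y P t i₀ d *
        ((∏ j : Fin n, ∏ m ∈ Finset.Icc 1 (d i₀), (1 + y * q ^ m * (P i₀ / t j))) /
          (∏ j : Fin n, ∏ m ∈ Finset.Icc 1 (d i₀), (1 - q ^ m * (P i₀ / t j)))) *
        (∏ j ∈ Finset.univ.erase i₀,
          (Rfac q (lam * (P i₀ / P j)) ((d i₀ : ℤ) + 1 - (d j : ℤ)) /
              Ryfac q y (lam * (P i₀ / P j)) ((d i₀ : ℤ) - (d j : ℤ))) *
            (Rfac q (lam * (P j / P i₀)) ((d j : ℤ) - (d i₀ : ℤ)) /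
              Ryfac q y (lam * (P j / P i₀)) ((d j : ℤ) - (d i₀ : ℤ)))) *
        bigF q y lam P i₀ d := by
  intro d
  -- reduce the coefficient of `X i₀ * (...)`
  rw [MvPowerSeries.X_def, add_comm d, MvPowerSeries.coeff_add_monomial_mul, one_mul,
    MvPowerSeries.coeff_apply]
  rw [coeff_prodOp_oneSub q i₀ (fun j => lam * q * (P i₀ / P j)), Finset.prod_map_toList]
  -- rewrite each diagonal factor as `1 - q^{(d i₀ - d j)+1} * (λ P i₀ / P j)`
  have hfac : ∀ j : Fin r, (1 : K) - lam * q * (P i₀ / P j) * (q ^ (d i₀) * q⁻¹ ^ (d j))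
      = 1 - q ^ (((d i₀ : ℤ) - (d j : ℤ)) + 1) * (lam * (P i₀ / P j)) := by
    intro j
    have hz : (q : K) ^ (((d i₀ : ℤ) - (d j : ℤ)) + 1)
        = q ^ (d i₀) * (q ^ (d j))⁻¹ * q := by
      rw [zpow_add₀ hq, zpow_sub₀ hq, zpow_one, zpow_natCast, zpow_natCast, div_eq_mul_inv]
    rw [hz, inv_pow]
    ring
  rw [Finset.prod_congr rfl fun j _ => hfac j]
  simp only [balJ, coefJ, bigE]
  -- split off the `i₀` parts of the three products over `i : Fin r`
  rw [← Finset.mul_prod_erase Finset.univ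
      (fun i => ∏ j : Fin n, ∏ m ∈ Finset.Icc 1 (d i), (1 + y * q ^ m * (P i / t j)))
      (Finset.mem_univ i₀),
    ← Finset.mul_prod_erase Finset.univ
      (fun i => ∏ j : Fin n, ∏ m ∈ Finset.Icc 1 (d i), (1 - q ^ m * (P i / t j)))
      (Finset.mem_univ i₀)]
  have hsplit : (∏ i : Fin r, ∏ j ∈ Finset.univ.erase i,
        (Rfac q (lam * (P i / P j)) ((d i : ℤ) - (d j : ℤ)) /
          Ryfac q y (lam * (P i / P j)) ((d i : ℤ) - (d j : ℤ))))
      = (∏ j ∈ Finset.univ.erase i₀,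
          (Rfac q (lam * (P i₀ / P j)) ((d i₀ : ℤ) - (d j : ℤ)) /
            Ryfac q y (lam * (P i₀ / P j)) ((d i₀ : ℤ) - (d j : ℤ))))
        * ((∏ j ∈ Finset.univ.erase i₀,
            (Rfac q (lam * (P j / P i₀)) ((d j : ℤ) - (d i₀ : ℤ)) /
              Ryfac q y (lam * (P j / P i₀)) ((d j : ℤ) - (d i₀ : ℤ))))
          * bigF q y lam P i₀ d) := by
    rw [← Finset.mul_prod_erase Finset.univ _ (Finset.mem_univ i₀)]
    congr 1
    rw [bigF, ← Finset.prod_mul_distrib]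
    refine Finset.prod_congr rfl fun i hi => ?_
    have hi0 : i₀ ∈ Finset.univ.erase i :=
      Finset.mem_erase.mpr ⟨(Finset.ne_of_mem_erase hi).symm, Finset.mem_univ _⟩
    rw [← Finset.mul_prod_erase _ _ hi0, Finset.erase_right_comm]
  rw [hsplit]
  -- rewrite the `Rfac` at `d i₀ + 1 - d j` on the right-hand side
  have hTj : ∀ j ∈ Finset.univ.erase i₀,
      (Rfac q (lam * (P i₀ / P j)) ((d i₀ : ℤ) + 1 - (d j : ℤ)) /
          Ryfac q y (lam * (P i₀ / P j)) ((d i₀ : ℤ) - (d j : ℤ))) *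
        (Rfac q (lam * (P j / P i₀)) ((d j : ℤ) - (d i₀ : ℤ)) /
          Ryfac q y (lam * (P j / P i₀)) ((d j : ℤ) - (d i₀ : ℤ)))
      = ((Rfac q (lam * (P i₀ / P j)) ((d i₀ : ℤ) - (d j : ℤ)) /
            Ryfac q y (lam * (P i₀ / P j)) ((d i₀ : ℤ) - (d j : ℤ))) *
          (Rfac q (lam * (P j / P i₀)) ((d j : ℤ) - (d i₀ : ℤ)) /
            Ryfac q y (lam * (P j / P i₀)) ((d j : ℤ) - (d i₀ : ℤ))))
        * (1 - q ^ (((d i₀ : ℤ) - (d j : ℤ)) + 1) * (lam * (P i₀ / P j))) := by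
    intro j hj
    have hne : i₀ ≠ j := (Finset.ne_of_mem_erase hj).symm
    rw [show (d i₀ : ℤ) + 1 - (d j : ℤ) = ((d i₀ : ℤ) - (d j : ℤ)) + 1 by ring,
      Rfac_succ q (lam * (P i₀ / P j)) hq (h2 i₀ j hne) ((d i₀ : ℤ) - (d j : ℤ))]
    ring
  rw [Finset.prod_congr rfl hTj, Finset.prod_mul_distrib, Finset.prod_mul_distrib]
  ring
end
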